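/- For t ∈ [0, 1/2), the quadratic form Q_t(z) = −tan(πt)·‖z‖² on ℂⁿ is a simple generating function of the map a_t(z) = e^{−2πit} z: the graph of the differential dQ_t in T*ℝ^{2n} equals the image under τ(z,Z) = ((z+Z)/2, i(z−Z)) of the graph {(z, e^{−2πit}z) : z ∈ ℂⁿ}. -/
import Mathlib

open Real Complex

lemma key_identity (t : ℝ) (ht0 : 0 ≤ t) (ht : t < 1 / 2) :
    Complex.I * (1 - Complex.exp (-(2 * Real.pi * t) * Complex.I)) =
      ((-2 * Real.tan (Real.pi * t) : ℝ) : ℂ) *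
        ((1 / 2 : ℂ) * (1 + Complex.exp (-(2 * Real.pi * t) * Complex.I))) := by
  have hcos : Real.cos (Real.pi * t) > 0 := by
    apply Real.cos_pos_of_mem_Ioo
    constructor
    · nlinarith [Real.pi_pos]
    · nlinarith [Real.pi_pos]
  have harg : (-(2 * (Real.pi : ℂ) * t)) = ((-(2 * Real.pi * t) : ℝ) : ℂ) := by push_cast; ring
  have hexp : Complex.exp (-(2 * Real.pi * t) * Complex.I) =
      (Real.cos (2 * (Real.pi * t)) : ℂ) - (Real.sin (2 * (Real.pi * t)) : ℂ) * Complex.I := by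
    rw [Complex.exp_mul_I, harg, ← Complex.ofReal_cos, ← Complex.ofReal_sin,
      Real.cos_neg, Real.sin_neg]
    push_cast
    ring_nf
  rw [hexp, Real.tan_eq_sin_div_cos, Real.sin_two_mul, Real.cos_two_mul]
  have hpy := Real.sin_sq_add_cos_sq (Real.pi * t)
  have hc0 : Real.cos (Real.pi * t) ≠ 0 := ne_of_gt hcos
  generalize Real.sin (Real.pi * t) = s at *
  generalize hc : Real.cos (Real.pi * t) = c at *
  rw [Complex.ext_iff]
  push_cast
  constructor <;> simp [← Complex.ofReal_pow] <;> field_simp <;> nlinarith [hpy]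

lemma one_add_exp_ne (t : ℝ) (ht0 : 0 ≤ t) (ht : t < 1 / 2) :
    (1 : ℂ) + Complex.exp (-(2 * Real.pi * t) * Complex.I) ≠ 0 := by
  have hcos : Real.cos (2 * (Real.pi * t)) > -1 := by
    rcases lt_or_eq_of_le (Real.neg_one_le_cos (2 * (Real.pi * t))) with h | h
    · exact h
    · exfalso
      have hcos2 : Real.cos (2 * (Real.pi * t)) = 2 * Real.cos (Real.pi * t) ^ 2 - 1 :=
        Real.cos_two_mul _
      have hpos : Real.cos (Real.pi * t) > 0 := by
        apply Real.cos_pos_of_mem_Ioo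
        constructor
        · nlinarith [Real.pi_pos]
        · nlinarith [Real.pi_pos]
      nlinarith
  intro h
  have hre : ((1 : ℂ) + Complex.exp (-(2 * Real.pi * t) * Complex.I)).re = 0 := by
    rw [h]; simp
  have harg : (-(2 * (Real.pi : ℂ) * t)) = ((-(2 * Real.pi * t) : ℝ) : ℂ) := by push_cast; ring
  have hexp : Complex.exp (-(2 * Real.pi * t) * Complex.I) =
      (Real.cos (2 * (Real.pi * t)) : ℂ) - (Real.sin (2 * (Real.pi * t)) : ℂ) * Complex.I := by
    rw [Complex.exp_mul_I, harg, ← Complex.ofReal_cos, ← Complex.ofReal_sin,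
      Real.cos_neg, Real.sin_neg]
    push_cast
    ring_nf
  rw [hexp] at hre
  simp only [Complex.add_re, Complex.one_re, Complex.sub_re, Complex.ofReal_re,
    Complex.mul_re, Complex.ofReal_im, Complex.I_re, Complex.I_im] at hre
  linarith

/-- For `t ∈ [0, 1/2)`, the quadratic form `Q_t(z) = −tan(πt)‖z‖²` on `ℂⁿ` is a
simple generating function of `a_t(z) = e^{−2πit} z`: the graph of `dQ_t`,
i.e. `{(w, −2tan(πt)·w)}`, equals the image under `τ(z,Z) = ((z+Z)/2, i(z−Z))`
of the graph `{(z, e^{−2πit} z)}`. -/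
theorem quadratic_generates_rotation (n : ℕ) (t : ℝ) (ht0 : 0 ≤ t) (ht : t < 1 / 2) :
    (fun p : (Fin n → ℂ) × (Fin n → ℂ) =>
        ((1 / 2 : ℂ) • (p.1 + p.2), Complex.I • (p.1 - p.2))) ''
      {p : (Fin n → ℂ) × (Fin n → ℂ) |
        p.2 = Complex.exp (-(2 * Real.pi * t) * Complex.I) • p.1} =
    {q : (Fin n → ℂ) × (Fin n → ℂ) | q.2 = (-2 * Real.tan (Real.pi * t) : ℝ) • q.1} := by
  set c : ℂ := Complex.exp (-(2 * Real.pi * t) * Complex.I) with hcdef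
  set r : ℝ := -2 * Real.tan (Real.pi * t) with hrdef
  have key : Complex.I * (1 - c) = (r : ℂ) * ((1 / 2 : ℂ) * (1 + c)) :=
    key_identity t ht0 ht
  have hne : (1 : ℂ) + c ≠ 0 := one_add_exp_ne t ht0 ht
  ext q
  constructor
  · rintro ⟨p, hp, rfl⟩
    simp only [Set.mem_setOf_eq] at hp ⊢
    funext i
    simp only [Pi.smul_apply, Pi.add_apply, Pi.sub_apply, smul_eq_mul, hp,
      Complex.real_smul]
    linear_combination p.1 i * key
  · intro hq
    simp only [Set.mem_setOf_eq] at hq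
    refine ⟨((2 / (1 + c)) • q.1, (2 * c / (1 + c)) • q.1), ?_, ?_⟩
    · simp only [Set.mem_setOf_eq]
      funext i
      simp only [Pi.smul_apply, smul_eq_mul]
      field_simp
    · have h1 : (1 / 2 : ℂ) • ((2 / (1 + c)) • q.1 + (2 * c / (1 + c)) • q.1) = q.1 := by
        funext i
        simp only [Pi.smul_apply, Pi.add_apply, smul_eq_mul]
        field_simp
      have h2 : Complex.I • ((2 / (1 + c)) • q.1 - (2 * c / (1 + c)) • q.1) = q.2 := by
        funext i
        rw [hq]
        simp only [Pi.smul_apply, Pi.sub_apply, smul_eq_mul, Complex.real_smul]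
        field_simp
        linear_combination 2 * q.1 i * key
      exact Prod.ext h1 h2
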